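/- Define on [0,π] the operations α ⊕ β = min{α+β, 2π−(α+β)} and α ⊖ β = |α − β|. For unit vectors in S², if u has polar angle φ ∈ [0,π] (angle to the north pole n = (0,0,1)), then the set of polar angles of points at spherical distance α ∈ (0,π) from u is exactly the interval [min{φ⊖α, φ⊕α}, max{φ⊖α, φ⊕α}]. -/

import Mathlib

/-!
Spherical distance and polar angle are both `InnerProductGeometry.angle`. The triangle inequality
for angles, in the triangles `n u w` and `(-n) u w`, confines the polar angle of `w` to
`[φ ⊖ α, φ ⊕ α]`. Conversely, write `n = cos φ • u + sin φ • e` with `e ⊥ u` and complete `u, e`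
to an orthonormal triple `u, e, f`. The circle is `θ ↦ cos α • u + sin α • (cos θ • e + sin θ • f)`,
along which the cosine of the polar angle is `cos φ cos α + sin φ sin α cos θ`; as `θ` runs over
`[0, π]` this sweeps out `[cos (φ + α), cos (φ - α)]`.
-/

open Real
open scoped RealInnerProductSpace

/-- The spherical (geodesic) distance between unit vectors. -/
noncomputable def sdist (u v : EuclideanSpace ℝ (Fin 3)) : ℝ :=
  Real.arccos ⟪u, v⟫

/-- The north pole `(0,0,1)` of the unit sphere in `ℝ³`. -/
noncomputable def north : EuclideanSpace ℝ (Fin 3) := EuclideanSpace.single 2 1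

/-- `α ⊕ β = min {α + β, 2π - (α + β)}`. -/
noncomputable def oplus (a b : ℝ) : ℝ := min (a + b) (2 * π - (a + b))

/-- `α ⊖ β = |α - β|`. -/
def ominus (a b : ℝ) : ℝ := |a - b|

open InnerProductGeometry Module Set

lemma oplus_le_pi (a b : ℝ) : oplus a b ≤ π := by
  rcases le_total (a + b) π with h | h
  · exact (min_le_left _ _).trans h
  · exact (min_le_right _ _).trans (by linarith)

lemma cos_oplus (a b : ℝ) : cos (oplus a b) = cos (a + b) := by
  rcases min_choice (a + b) (2 * π - (a + b)) with h | h <;> rw [oplus, h]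
  rw [cos_two_pi_sub]

lemma ominus_le_oplus {a b : ℝ} (ha : a ∈ Icc 0 π) (hb : b ∈ Icc 0 π) :
    ominus a b ≤ oplus a b := by
  obtain ⟨ha₀, haπ⟩ := ha
  obtain ⟨hb₀, hbπ⟩ := hb
  refine le_min ?_ ?_ <;> rw [ominus, abs_sub_le_iff] <;> constructor <;> linarith

lemma cos_mem_Icc_of_mem_Icc_ominus_oplus {a b ψ : ℝ} (hψ : ψ ∈ Icc (ominus a b) (oplus a b)) :
    cos ψ ∈ Icc (cos (a + b)) (cos (a - b)) := by
  have hψ₀ : 0 ≤ ψ := (abs_nonneg _).trans hψ.1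
  have hψπ : ψ ≤ π := hψ.2.trans (oplus_le_pi a b)
  constructor
  · rw [← cos_oplus]
    exact cos_le_cos_of_nonneg_of_le_pi hψ₀ (oplus_le_pi a b) hψ.2
  · rw [← cos_abs (a - b)]
    exact cos_le_cos_of_nonneg_of_le_pi (abs_nonneg _) hψπ hψ.1

section Angle

variable {V : Type*} [NormedAddCommGroup V] [InnerProductSpace ℝ V]

lemma ominus_angle_le_angle (x y z : V) : ominus (angle x y) (angle y z) ≤ angle x z := by
  have h₁ := angle_le_angle_add_angle x z y
  have h₂ := angle_le_angle_add_angle y x z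
  rw [angle_comm z y] at h₁
  rw [angle_comm y x] at h₂
  rw [ominus, abs_sub_le_iff]
  constructor <;> linarith

lemma angle_le_oplus_angle (x y z : V) : angle x z ≤ oplus (angle x y) (angle y z) := by
  refine le_min (angle_le_angle_add_angle x y z) ?_
  have h := angle_le_angle_add_angle y (-x) z
  rw [angle_comm y (-x), angle_neg_left, angle_neg_left] at h
  linarith

end Angle

section Construction

variable {E : Type*} [NormedAddCommGroup E] [InnerProductSpace ℝ E] [FiniteDimensional ℝ E]

lemma Submodule.exists_mem_orthogonal_norm_eq_one {K : Submodule ℝ E}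
    (hK : finrank ℝ K < finrank ℝ E) : ∃ f ∈ Kᗮ, ‖f‖ = 1 := by
  have : Nontrivial Kᗮ := by
    rw [← finrank_pos_iff (R := ℝ)]
    have := K.finrank_add_finrank_orthogonal
    omega
  obtain ⟨f, hf⟩ := exists_norm_eq Kᗮ zero_le_one
  exact ⟨f, f.2, hf⟩

lemma Submodule.exists_mem_orthogonal_eq_norm_smul {K : Submodule ℝ E}
    (hK : finrank ℝ K < finrank ℝ E) {v : E} (hv : v ∈ Kᗮ) :
    ∃ e ∈ Kᗮ, ‖e‖ = 1 ∧ v = ‖v‖ • e := by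
  by_cases hv₀ : v = 0
  · obtain ⟨e, he, he₁⟩ := K.exists_mem_orthogonal_norm_eq_one hK
    exact ⟨e, he, he₁, by simp [hv₀]⟩
  · refine ⟨‖v‖⁻¹ • v, Kᗮ.smul_mem _ hv, norm_smul_inv_norm hv₀, ?_⟩
    rw [smul_inv_smul₀ (norm_ne_zero_iff.mpr hv₀)]

lemma exists_eq_cos_angle_smul_add_sin_angle_smul (hE : 1 < finrank ℝ E) {x y : E}
    (hx : ‖x‖ = 1) (hy : ‖y‖ = 1) :
    ∃ e : E, ‖e‖ = 1 ∧ ⟪y, e⟫ = 0 ∧ x = cos (angle x y) • y + sin (angle x y) • e := by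
  rw [angle_comm]
  set v := x - ⟪y, x⟫ • y with hv_def
  have hyv : ⟪y, v⟫ = 0 := by
    rw [inner_sub_right, real_inner_smul_right, real_inner_self_eq_norm_sq, hy]; ring
  have hv : ‖v‖ = sin (angle y x) := by
    have hsq : ‖v‖ ^ 2 = sin (angle y x) ^ 2 := by
      rw [sin_sq, ← inner_eq_cos_angle_of_norm_eq_one hy hx, hv_def, norm_sub_sq_real,
        real_inner_smul_right, norm_smul, hx, hy, real_inner_comm x y, norm_eq_abs, mul_one,
        sq_abs]
      ring
    exact (sq_eq_sq₀ (norm_nonneg v) (sin_angle_nonneg y x)).1 hsq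
  have hK : finrank ℝ (ℝ ∙ y) < finrank ℝ E := by
    rwa [finrank_span_singleton (norm_ne_zero_iff.mp (hy.trans_ne one_ne_zero))]
  obtain ⟨e, he, he₁, hve⟩ := (ℝ ∙ y).exists_mem_orthogonal_eq_norm_smul hK
    (Submodule.mem_orthogonal_singleton_iff_inner_right.mpr hyv)
  refine ⟨e, he₁, Submodule.mem_orthogonal_singleton_iff_inner_right.mp he, ?_⟩
  rw [← hv, ← hve, ← inner_eq_cos_angle_of_norm_eq_one hy hx, hv_def, add_sub_cancel]

lemma exists_norm_eq_one_inner_eq_zero_inner_eq_zero (hE : 2 < finrank ℝ E) (x y : E) :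
    ∃ f : E, ‖f‖ = 1 ∧ ⟪x, f⟫ = 0 ∧ ⟪y, f⟫ = 0 := by
  classical
  have hK : finrank ℝ (Submodule.span ℝ {x, y}) < finrank ℝ E := by
    have h := finrank_span_finset_le_card (R := ℝ) ({x, y} : Finset E)
    rw [Finset.coe_pair] at h
    have : finrank ℝ (Submodule.span ℝ {x, y}) ≤ 2 := h.trans Finset.card_le_two
    omega
  obtain ⟨f, hf, hf₁⟩ := (Submodule.span ℝ {x, y}).exists_mem_orthogonal_norm_eq_one hK
  exact ⟨f, hf₁, Submodule.inner_right_of_mem_orthogonal (Submodule.subset_span (by simp)) hf,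
    Submodule.inner_right_of_mem_orthogonal (Submodule.subset_span (by simp)) hf⟩

end Construction

section GreatCircle

variable {E : Type*} [NormedAddCommGroup E] [InnerProductSpace ℝ E]

lemma real_inner_cos_smul_add_sin_smul {u x y : E} (hu : ‖u‖ = 1) (hx : ⟪u, x⟫ = 0)
    (hy : ⟪u, y⟫ = 0) (a b : ℝ) :
    ⟪cos a • u + sin a • x, cos b • u + sin b • y⟫ = cos a * cos b + sin a * sin b * ⟪x, y⟫ := by
  simp only [inner_add_left, inner_add_right, real_inner_smul_left, real_inner_smul_right,
    real_inner_self_eq_norm_sq, hu, real_inner_comm u x, hx, hy]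
  ring

lemma norm_cos_smul_add_sin_smul {u v : E} (hu : ‖u‖ = 1) (hv : ‖v‖ = 1) (huv : ⟪u, v⟫ = 0)
    (t : ℝ) : ‖cos t • u + sin t • v‖ = 1 := by
  have h := real_inner_cos_smul_add_sin_smul hu huv huv t t
  rw [real_inner_self_eq_norm_sq, real_inner_self_eq_norm_sq, hv, ← sq, ← sq, one_pow, mul_one,
    cos_sq_add_sin_sq] at h
  exact (pow_eq_one_iff_of_nonneg (norm_nonneg _) two_ne_zero).1 h

lemma inner_cos_smul_add_sin_smul {u v : E} (hu : ‖u‖ = 1) (huv : ⟪u, v⟫ = 0) (t : ℝ) :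
    ⟪u, cos t • u + sin t • v⟫ = cos t := by
  simp [inner_add_right, real_inner_smul_right, hu, huv]

lemma angle_cos_smul_add_sin_smul {u v : E} (hu : ‖u‖ = 1) (hv : ‖v‖ = 1) (huv : ⟪u, v⟫ = 0)
    {t : ℝ} (ht : t ∈ Icc 0 π) : angle u (cos t • u + sin t • v) = t := by
  apply injOn_cos ⟨angle_nonneg _ _, angle_le_pi _ _⟩ ht
  rw [← inner_eq_cos_angle_of_norm_eq_one hu (norm_cos_smul_add_sin_smul hu hv huv t),
    inner_cos_smul_add_sin_smul hu huv]

end GreatCircle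

theorem exists_norm_eq_one_angle_eq_angle_eq {E : Type*} [NormedAddCommGroup E]
    [InnerProductSpace ℝ E] [FiniteDimensional ℝ E] (hE : 2 < finrank ℝ E) {x y : E}
    (hx : ‖x‖ = 1) (hy : ‖y‖ = 1) {α ψ : ℝ} (hα : α ∈ Icc 0 π)
    (hψ : ψ ∈ Icc (ominus (angle x y) α) (oplus (angle x y) α)) :
    ∃ z : E, ‖z‖ = 1 ∧ angle y z = α ∧ angle x z = ψ := by
  set φ := angle x y
  obtain ⟨e, he, hye, hx_eq⟩ := exists_eq_cos_angle_smul_add_sin_angle_smul (by omega) hx hy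
  obtain ⟨f, hf, hyf, hef⟩ := exists_norm_eq_one_inner_eq_zero_inner_eq_zero hE y e
  set g : ℝ → E := fun θ ↦ cos θ • e + sin θ • f
  have hg (θ : ℝ) : ‖g θ‖ = 1 := norm_cos_smul_add_sin_smul he hf hef θ
  have hyg (θ : ℝ) : ⟪y, g θ⟫ = 0 := by
    simp only [g, inner_add_right, real_inner_smul_right, hye, hyf, mul_zero, add_zero]
  set z : ℝ → E := fun θ ↦ cos α • y + sin α • g θ
  have hz (θ : ℝ) : ‖z θ‖ = 1 := norm_cos_smul_add_sin_smul hy (hg θ) (hyg θ) α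
  -- the spherical law of cosines, `θ` being the angle at `y` between the arcs to `x` and `z θ`
  have hxz (θ : ℝ) : ⟪x, z θ⟫ = cos φ * cos α + sin φ * sin α * cos θ := by
    rw [hx_eq, real_inner_cos_smul_add_sin_smul hy hye (hyg θ), inner_cos_smul_add_sin_smul he hef]
  obtain ⟨θ, -, hθ⟩ : cos ψ ∈ (fun θ ↦ ⟪x, z θ⟫) '' Icc 0 π := by
    refine intermediate_value_Icc' pi_pos.le ?_ ?_
    · simp only [hxz]
      fun_prop
    · simpa [hxz, cos_add, cos_sub] using cos_mem_Icc_of_mem_Icc_ominus_oplus hψ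
  refine ⟨z θ, hz θ, angle_cos_smul_add_sin_smul hy (hg θ) (hyg θ) hα, ?_⟩
  refine injOn_cos ⟨angle_nonneg _ _, angle_le_pi _ _⟩
    ⟨(abs_nonneg _).trans hψ.1, hψ.2.trans (oplus_le_pi _ _)⟩ ?_
  rwa [← inner_eq_cos_angle_of_norm_eq_one hx (hz θ)]

lemma sdist_eq_angle {u v : EuclideanSpace ℝ (Fin 3)} (hu : ‖u‖ = 1) (hv : ‖v‖ = 1) :
    sdist u v = angle u v := by
  simp [sdist, angle, hu, hv]

/-- For a unit vector `u` with polar angle `φ` (the angle to the north pole), the set of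
polar angles of points of the unit sphere at spherical distance `α ∈ (0,π)` from `u` is
exactly the interval `[min {φ⊖α, φ⊕α}, max {φ⊖α, φ⊕α}]`. -/
theorem polar_angles_of_spherical_circle (u : EuclideanSpace ℝ (Fin 3))
    (hu : ‖u‖ = 1) (φ : ℝ) (hφ : sdist north u = φ)
    (α : ℝ) (hα : α ∈ Set.Ioo 0 π) :
    {ψ : ℝ | ∃ w : EuclideanSpace ℝ (Fin 3),
        ‖w‖ = 1 ∧ sdist u w = α ∧ sdist north w = ψ} =
      Set.Icc (min (ominus φ α) (oplus φ α)) (max (ominus φ α) (oplus φ α)) := by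
  have hn : ‖north‖ = 1 := by simp [north]
  rw [sdist_eq_angle hn hu] at hφ
  subst hφ
  have hφ : angle north u ∈ Icc 0 π := ⟨angle_nonneg _ _, angle_le_pi _ _⟩
  replace hα : α ∈ Icc 0 π := Ioo_subset_Icc_self hα
  rw [min_eq_left (ominus_le_oplus hφ hα), max_eq_right (ominus_le_oplus hφ hα)]
  ext ψ
  constructor
  · rintro ⟨w, hw, rfl, rfl⟩
    rw [sdist_eq_angle hu hw, sdist_eq_angle hn hw]
    exact ⟨ominus_angle_le_angle _ _ _, angle_le_oplus_angle _ _ _⟩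
  · intro hψ
    have h3 : 2 < finrank ℝ (EuclideanSpace ℝ (Fin 3)) := by simp
    obtain ⟨w, hw, hαw, hψw⟩ := exists_norm_eq_one_angle_eq_angle_eq h3 hn hu hα hψ
    exact ⟨w, hw, by rw [sdist_eq_angle hu hw, hαw], by rw [sdist_eq_angle hn hw, hψw]⟩
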